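/- Let (a[m]) for m = −M,…,M be i.i.d. random variables uniform on {+c, −c} (c > 0), let p : ℝ → ℝ, and fix t₀ ∈ ℝ. Define X(t₀) = Σ_{m=−M}^{M} a[m]·p(t₀ − m δT). Suppose p(t₀) ≠ 0 and the sequence s²_N = c²·Σ_{m=−M}^{M} p(t₀ − m δT)² converges to a finite limit L > 0 as M → ∞. Then the Lindeberg condition fails for the triangular array {a[m]·p(t₀ − m δT)}: there exists ε > 0 such that lim_{N→∞} (1/s²_N)·Σ_m E[|a[m] p(t₀ − m δT)|² · 1{|a[m] p(t₀ − m δT)| > ε s_N}] = c² p(t₀)²/L > 0. -/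

import Mathlib

/-!
Since the symmetric partial sums of `p (t₀ - m δT) ^ 2` converge, these coefficients tend to `0`
along the cofinite filter, so `S := sup_{m ≠ 0} |p (t₀ - m δT)|` is attained and `S < |p t₀|`.
Each `a m` has modulus `c` almost surely, so the `m`-th Lindeberg term is `c² p(t₀ - m δT)²` or `0`
according as `ε s_N < c |p (t₀ - m δT)|` or not. Choosing `ε` with `c S < ε √L < c |p t₀|`, eventually
only the term `m = 0` survives, and the Lindeberg sum is `c² p(t₀)² / s²_N → c² p(t₀)² / L`.
-/

open MeasureTheory ProbabilityTheory Filter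
open scoped ENNReal

open Finset Topology

theorem summable_of_nonneg_of_tendsto_sum_Icc {f : ℤ → ℝ} (hf : 0 ≤ f) {L : ℝ}
    (h : Tendsto (fun N : ℕ => ∑ m ∈ Icc (-(N : ℤ)) N, f m) atTop (𝓝 L)) : Summable f := by
  have hmono : Monotone fun N : ℕ => ∑ m ∈ Icc (-(N : ℤ)) N, f m := fun M N hMN =>
    sum_le_sum_of_subset_of_nonneg (Icc_subset_Icc (by omega) (by omega)) fun m _ _ => hf m
  refine summable_of_sum_le (c := L) hf fun u => ?_
  have hu : u ⊆ Icc (-((u.sup Int.natAbs : ℕ) : ℤ)) (u.sup Int.natAbs : ℕ) := fun m hm => by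
    have := le_sup (f := Int.natAbs) hm
    rw [mem_Icc]; omega
  exact (sum_le_sum_of_subset_of_nonneg hu fun m _ _ => hf m).trans (hmono.ge_of_tendsto h _)

theorem exists_lt_abs_forall_abs_le_of_tendsto_cofinite {α : Type*} {f : α → ℝ}
    (hf : Tendsto f cofinite (𝓝 0)) {a₀ : α} (h₀ : f a₀ ≠ 0)
    (hdom : ∀ a ≠ a₀, |f a| < |f a₀|) : ∃ S < |f a₀|, ∀ a ≠ a₀, |f a| ≤ S := by
  have hr : 0 < |f a₀| / 2 := by positivity
  have hfin : {a | a ≠ a₀ ∧ |f a₀| / 2 ≤ |f a|}.Finite := by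
    refine (eventually_cofinite.mp ?_).subset fun a ha => not_lt.mpr ha.2
    simpa using hf.abs.eventually (eventually_lt_nhds (by simpa using hr))
  rcases Set.eq_empty_or_nonempty {a | a ≠ a₀ ∧ |f a₀| / 2 ≤ |f a|} with hempty | hne
  · refine ⟨|f a₀| / 2, by linarith, fun a ha => not_lt.mp fun hlt => ?_⟩
    exact hempty.subset ⟨ha, hlt.le⟩
  · obtain ⟨a₁, ⟨ha₁, -⟩, hmax⟩ := Set.exists_max_image _ (fun a => |f a|) hfin hne
    refine ⟨max (|f a₀| / 2) |f a₁|, max_lt (by linarith) (hdom a₁ ha₁), fun a ha => ?_⟩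
    rcases le_or_gt (|f a₀| / 2) |f a| with hbig | hsmall
    · exact le_max_of_le_right (hmax a ⟨ha, hbig⟩)
    · exact le_max_of_le_left hsmall.le

section Rademacher

variable {Ω : Type*} [MeasurableSpace Ω] {μ : Measure Ω}

theorem ae_abs_eq_of_map_eq_dirac_add_dirac {X : Ω → ℝ} {c : ℝ} {w₁ w₂ : ℝ≥0∞}
    (hX : AEMeasurable X μ) (hlaw : μ.map X = w₁ • Measure.dirac c + w₂ • Measure.dirac (-c)) :
    ∀ᵐ ω ∂μ, |X ω| = |c| := by
  refine ae_of_ae_map (p := fun x => |x| = |c|) hX ?_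
  have hmeas : MeasurableSet {x : ℝ | |x| = |c|} :=
    measurableSet_eq_fun continuous_abs.measurable measurable_const
  rw [hlaw, ae_add_measure_iff]
  exact ⟨Measure.ae_smul_measure ((ae_dirac_iff hmeas).mpr rfl) _,
    Measure.ae_smul_measure ((ae_dirac_iff hmeas).mpr (abs_neg c)) _⟩

theorem integral_ite_lt_abs_mul_of_ae_abs_eq [IsProbabilityMeasure μ] {X : Ω → ℝ} {c : ℝ}
    (hX : ∀ᵐ ω ∂μ, |X ω| = c) (τ r : ℝ) :
    ∫ ω, (if τ < |X ω * r| then (X ω * r) ^ 2 else 0) ∂μ =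
      if τ < c * |r| then c ^ 2 * r ^ 2 else 0 := by
  rw [integral_congr_ae (g := fun _ => if τ < c * |r| then c ^ 2 * r ^ 2 else 0), integral_const]
  · simp
  filter_upwards [hX] with ω hω
  rw [← sq_abs (X ω * r), abs_mul, hω, mul_pow, sq_abs]

end Rademacher

theorem exists_pos_eventually_mul_sqrt_mem_Ioo {ι : Type*} {l : Filter ι} {s : ι → ℝ} {L : ℝ}
    (hs : Tendsto s l (𝓝 L)) (hL : 0 < L) {x y : ℝ} (hx : 0 ≤ x) (hxy : x < y) :
    ∃ ε > 0, ∀ᶠ i in l, x < ε * √(s i) ∧ ε * √(s i) < y := by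
  have hmid : (x + y) / (2 * √L) * √L = (x + y) / 2 := by field_simp
  have hlim := hs.sqrt.const_mul ((x + y) / (2 * √L))
  rw [hmid] at hlim
  have hxy' : 0 < x + y := by linarith
  refine ⟨(x + y) / (2 * √L), by positivity, ?_⟩
  exact (hlim.eventually (eventually_gt_nhds (by linarith))).and
    (hlim.eventually (eventually_lt_nhds (by linarith)))

theorem stmt_6_general {Ω : Type*} [MeasurableSpace Ω] (μ : Measure Ω) [IsProbabilityMeasure μ]
    (c δT L t₀ : ℝ) (hc : 0 < c) (hL : 0 < L)
    (p : ℝ → ℝ) (hp0 : p t₀ ≠ 0)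
    (hdom : ∀ m : ℤ, m ≠ 0 → |p (t₀ - m * δT)| < |p t₀|)
    (a : ℤ → Ω → ℝ)
    (hlaw : ∀ m : ℤ, μ.map (a m) =
      (1 / 2 : ℝ≥0∞) • Measure.dirac c + (1 / 2 : ℝ≥0∞) • Measure.dirac (-c))
    (s2 : ℕ → ℝ)
    (hs2 : ∀ M : ℕ, s2 M = c ^ 2 * ∑ m ∈ Finset.Icc (-(M : ℤ)) (M : ℤ), p (t₀ - m * δT) ^ 2)
    (hs2lim : Tendsto s2 atTop (nhds L)) :
    ∃ ε > (0 : ℝ),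
      Tendsto (fun M : ℕ =>
          (1 / s2 M) * ∑ m ∈ Finset.Icc (-(M : ℤ)) (M : ℤ),
            ∫ ω, (if ε * Real.sqrt (s2 M) < |a m ω * p (t₀ - m * δT)|
                  then (a m ω * p (t₀ - m * δT)) ^ 2 else 0) ∂μ)
        atTop (nhds (c ^ 2 * p t₀ ^ 2 / L)) ∧
      0 < c ^ 2 * p t₀ ^ 2 / L := by
  set f : ℤ → ℝ := fun m => p (t₀ - m * δT)
  have hf0 : f 0 = p t₀ := by simp [f]
  have hpartial : Tendsto (fun M : ℕ => ∑ m ∈ Icc (-(M : ℤ)) M, f m ^ 2) atTop (𝓝 (L / c ^ 2)) :=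
    (hs2lim.div_const (c ^ 2)).congr fun M => by
      rw [hs2, mul_div_cancel_left₀ _ (by positivity)]
  have hdecay : Tendsto f cofinite (𝓝 0) := by
    have := (summable_of_nonneg_of_tendsto_sum_Icc (fun m => sq_nonneg (f m))
      hpartial).tendsto_cofinite_zero.sqrt
    refine (tendsto_zero_iff_abs_tendsto_zero f).mpr ?_
    simpa only [Real.sqrt_sq_eq_abs, Real.sqrt_zero, Function.comp_def] using this
  obtain ⟨S, hSlt, hSle⟩ := exists_lt_abs_forall_abs_le_of_tendsto_cofinite hdecay
    (hf0 ▸ hp0) (hf0 ▸ hdom)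
  obtain ⟨ε, hε, hwindow⟩ := exists_pos_eventually_mul_sqrt_mem_Ioo hs2lim hL
    (mul_nonneg hc.le ((abs_nonneg _).trans (hSle 1 one_ne_zero)))
    (mul_lt_mul_of_pos_left hSlt hc)
  refine ⟨ε, hε, ?_, by positivity⟩
  refine (tendsto_const_nhds.div hs2lim hL.ne').congr' ?_
  filter_upwards [hwindow] with M ⟨hlow, hhigh⟩
  have habs : ∀ m, ∀ᵐ ω ∂μ, |a m ω| = c := fun m => by
    -- `μ.map (a m)` has mass `1`, and `map` of a non-a.e.-measurable function is `0`
    simpa [abs_of_pos hc] using ae_abs_eq_of_map_eq_dirac_add_dirac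
      (.of_map_ne_zero (ne_of_apply_ne (· Set.univ) (by simp [hlaw m]))) (hlaw m)
  simp only [integral_ite_lt_abs_mul_of_ae_abs_eq (habs _)]
  rw [sum_eq_single_of_mem 0 (by simp) ?_]
  · simp only [Int.cast_zero, zero_mul, sub_zero, if_pos (hf0 ▸ hhigh)]
    rw [Pi.div_apply, one_div_mul_eq_div]
  intro m _ hm
  exact if_neg (not_lt.mpr ((mul_le_mul_of_nonneg_left (hSle m hm) hc.le).trans hlow.le))

/-- Failure of the Lindeberg condition for FTN signaling with QPSK symbols:
with i.i.d. symbols a[m] uniform on {±c}, coefficients p(t₀ − m δT), dominant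
coefficient p(t₀) ≠ 0, and variances s²_N → L > 0, there is ε > 0 for which the
Lindeberg sum converges to c² p(t₀)²/L > 0. -/
theorem stmt_6 {Ω : Type*} [MeasurableSpace Ω] (μ : Measure Ω) [IsProbabilityMeasure μ]
    (c δT L t₀ : ℝ) (hc : 0 < c) (hδT : 0 < δT) (hL : 0 < L)
    (p : ℝ → ℝ) (hp0 : p t₀ ≠ 0)
    (hdom : ∀ m : ℤ, m ≠ 0 → |p (t₀ - m * δT)| < |p t₀|)
    (a : ℤ → Ω → ℝ) (hmeas : ∀ m, Measurable (a m))
    (hiid : iIndepFun a μ)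
    (hlaw : ∀ m : ℤ, μ.map (a m) =
      (1 / 2 : ℝ≥0∞) • Measure.dirac c + (1 / 2 : ℝ≥0∞) • Measure.dirac (-c))
    (s2 : ℕ → ℝ)
    (hs2 : ∀ M : ℕ, s2 M = c ^ 2 * ∑ m ∈ Finset.Icc (-(M : ℤ)) (M : ℤ), p (t₀ - m * δT) ^ 2)
    (hs2lim : Tendsto s2 atTop (nhds L)) :
    ∃ ε > (0 : ℝ),
      Tendsto (fun M : ℕ =>
          (1 / s2 M) * ∑ m ∈ Finset.Icc (-(M : ℤ)) (M : ℤ),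
            ∫ ω, (if ε * Real.sqrt (s2 M) < |a m ω * p (t₀ - m * δT)|
                  then (a m ω * p (t₀ - m * δT)) ^ 2 else 0) ∂μ)
        atTop (nhds (c ^ 2 * p t₀ ^ 2 / L)) ∧
      0 < c ^ 2 * p t₀ ^ 2 / L :=
  stmt_6_general μ c δT L t₀ hc hL p hp0 hdom a hlaw s2 hs2 hs2lim
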